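/- arXiv:2407.04945 — 6 statements merged into one kernel-verified Lean document; each statement's English description precedes it below -/
import Mathlib

section
/- Let θ ∈ ℝ, r > 0, α ∈ (0,1), and let q be an odd positive integer with q ≥ 8·log(1/α). Let T_1,…,T_q be independent real random variables such that P(|T_i − θ| ≤ r) ≥ 3/4 for each i. Then the median T_med of T_1,…,T_q satisfies P(|T_med − θ| ≤ r) ≥ 1 − α. -/
open MeasureTheory ProbabilityTheory Finset Real
open scoped NNReal

/-!
Call `T i` a success when `|T i - θ| ≤ r`. If the middle entry of a sorted list lay below an
interval, so would all entries before it, leaving at most half of the list for the interval (and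
symmetrically above); hence the median succeeds as soon as a strict majority of the `T i` do. The successes are independent with probability at least `3 / 4` each, so by Hoeffding's
inequality their number drops to `q / 2` or below with probability at most
`exp (-2 (1/4)² q) = exp (-q / 8) ≤ α`.
-/

namespace List

variable {α : Type*} [LinearOrder α] {l : List α} {k : ℕ}

theorem SortedLE.getElem_le_of_lt_countP (hl : l.SortedLE) (hk : k < l.length) {b : α}
    (h : k < l.countP (· ≤ b)) : l[k] ≤ b := by
  by_contra! hb
  have hdrop : (l.drop k).countP (· ≤ b) = 0 := by
    refine countP_eq_zero.2 fun x hx => ?_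
    obtain ⟨j, hj, rfl⟩ := mem_iff_getElem.1 hx
    simpa using hb.trans_le (hl.getElem_le_getElem_of_le (Nat.le_add_right k j))
  have htake : (l.take k).countP (· ≤ b) ≤ k :=
    countP_le_length.trans (length_take_le k l)
  rw [← take_append_drop k l, countP_append, hdrop] at h
  omega

theorem SortedLE.le_getElem_of_length_lt_add_countP (hl : l.SortedLE) (hk : k < l.length) {a : α}
    (h : l.length < k + 1 + l.countP (a ≤ ·)) : a ≤ l[k] := by
  by_contra! ha
  have htake : (l.take (k + 1)).countP (a ≤ ·) = 0 := by
    refine countP_eq_zero.2 fun x hx => ?_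
    obtain ⟨j, hj, rfl⟩ := mem_iff_getElem.1 hx
    simp only [length_take] at hj
    simpa using (hl.getElem_le_getElem_of_le (by omega : j ≤ k)).trans_lt ha
  have hdrop : (l.drop (k + 1)).countP (a ≤ ·) ≤ l.length - (k + 1) :=
    countP_le_length.trans_eq (length_drop ..)
  rw [← take_append_drop (k + 1) l, countP_append, htake] at h
  simp only [length_append, length_take, length_drop] at h hdrop
  omega

theorem SortedLE.getD_median_mem_Icc (hl : l.SortedLE) {n : ℕ} (hn : l.length = n) {a b : α}
    (d : α) (h : n < 2 * l.countP (· ∈ Set.Icc a b)) :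
    l.getD ((n + 1) / 2 - 1) d ∈ Set.Icc a b := by
  subst hn
  have hIcc_le : l.countP (· ∈ Set.Icc a b) ≤ l.countP (· ≤ b) :=
    countP_mono_left fun x _ hx => by simp_all
  have hle_Icc : l.countP (· ∈ Set.Icc a b) ≤ l.countP (a ≤ ·) :=
    countP_mono_left fun x _ hx => by simp_all
  have hk : (l.length + 1) / 2 - 1 < l.length := by
    have := l.countP_le_length (p := (· ∈ Set.Icc a b))
    omega
  rw [getD_eq_getElem _ _ hk]
  exact ⟨hl.le_getElem_of_length_lt_add_countP hk (by omega),
    hl.getElem_le_of_lt_countP hk (by omega)⟩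

end List

theorem Multiset.countP_sort {α : Type*} (s : Multiset α) (r : α → α → Prop) [DecidableRel r]
    [IsTrans α r] [Std.Antisymm r] [Std.Total r] (p : α → Prop) [DecidablePred p] :
    (s.sort r).countP (p ·) = s.countP p := by
  rw [← Multiset.coe_countP, Multiset.sort_eq]

theorem median_mem_Icc_of_lt_two_mul_card {α : Type*} [LinearOrder α] {q : ℕ} (f : Fin q → α)
    {a b : α} (d : α) (h : q < 2 * #{i | f i ∈ Set.Icc a b}) :
    ((univ.val.map f).sort (· ≤ ·)).getD ((q + 1) / 2 - 1) d ∈ Set.Icc a b :=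
  (List.Pairwise.sortedLE (Multiset.pairwise_sort _ _)).getD_median_mem_Icc (by simp) d
    (by rwa [Multiset.countP_sort, Multiset.countP_map])

namespace ProbabilityTheory.iIndepFun

variable {Ω ι β : Type*} [MeasurableSpace Ω] [Fintype ι] [MeasurableSpace β] {μ : Measure Ω}
  [IsProbabilityMeasure μ] {T : ι → Ω → β} {G : Set β} [DecidablePred (· ∈ G)]

theorem measureReal_card_filter_mem_le_le (hT : ∀ i, Measurable (T i)) (hindep : iIndepFun T μ)
    (hG : MeasurableSet G) {p t : ℝ} (hp : ∀ i, p ≤ μ.real (T i ⁻¹' G)) (ht : 0 ≤ t) :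
    μ.real {ω | #{i | T i ω ∈ G} ≤ (p - t) * Fintype.card ι} ≤
      exp (-2 * t ^ 2 * Fintype.card ι) := by
  -- Hoeffding bounds upward deviations, so it is applied to the failure indicators.
  set Y : ι → Ω → ℝ := fun i => (T i ⁻¹' G)ᶜ.indicator 1
  have hY_meas (i : ι) : Measurable (Y i) := measurable_one.indicator (hT i hG).compl
  have hY_indep : iIndepFun (fun i ω => Y i ω - μ[Y i]) μ := by
    exact hindep.comp (fun i x => Gᶜ.indicator (1 : β → ℝ) x - μ[Y i])
      (fun i => (measurable_one.indicator hG.compl).sub_const _)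
  have hY_subG (i : ι) : HasSubgaussianMGF (fun ω => Y i ω - μ[Y i]) 4⁻¹ μ := by
    have h := hasSubgaussianMGF_of_mem_Icc (a := 0) (b := 1) (hY_meas i).aemeasurable
      (ae_of_all μ fun ω => by by_cases h : ω ∈ T i ⁻¹' G <;> simp [Y, h])
    rwa [sub_zero, nnnorm_one, div_pow, one_pow, show (2 : ℝ≥0) ^ 2 = 4 by norm_num,
      ← inv_eq_one_div] at h
  have hY_sum (ω : Ω) : ∑ i, (Y i ω - μ[Y i]) =
      ∑ i, μ.real (T i ⁻¹' G) - #{i | T i ω ∈ G} := by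
    have hcard : (#{i | T i ω ∈ G} + #{i | T i ω ∉ G} : ℝ) = Fintype.card ι := by
      exact_mod_cast card_filter_add_card_filter_not (s := univ) (fun i => T i ω ∈ G)
    have hY (i : ι) : Y i ω = if T i ω ∉ G then 1 else 0 := by
      by_cases h : T i ω ∈ G <;> simp [Y, h]
    have hY_mean (i : ι) : μ[Y i] = 1 - μ.real (T i ⁻¹' G) := by
      rw [integral_indicator_one (hT i hG).compl, probReal_compl_eq_one_sub (hT i hG)]
    simp only [sum_sub_distrib, hY, hY_mean, sum_boole, sum_const, card_univ, nsmul_eq_mul]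
    linarith
  calc μ.real {ω | #{i | T i ω ∈ G} ≤ (p - t) * Fintype.card ι}
      ≤ μ.real {ω | t * Fintype.card ι ≤ ∑ i, (Y i ω - μ[Y i])} := by
        refine measureReal_mono fun ω hω => ?_
        have := Finset.sum_le_sum fun i (_ : i ∈ univ) => hp i
        simp only [Set.mem_ofPred_eq, hY_sum, sum_const, card_univ, nsmul_eq_mul] at hω this ⊢
        linarith
    _ ≤ exp (-(t * Fintype.card ι) ^ 2 / (2 * ↑(∑ _i : ι, (4⁻¹ : ℝ≥0)))) :=
        HasSubgaussianMGF.measure_sum_ge_le_of_iIndepFun hY_indep (s := univ)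
          (fun i _ => hY_subG i) (by positivity)
    _ = exp (-2 * t ^ 2 * Fintype.card ι) := by
        congr 1
        rcases eq_or_ne (Fintype.card ι : ℝ) 0 with h | h
        · simp [h]
        · simp only [sum_const, card_univ, nsmul_eq_mul, NNReal.coe_mul, NNReal.coe_natCast,
            NNReal.coe_inv, NNReal.coe_ofNat, neg_mul]
          field_simp
          ring

theorem ofReal_one_sub_exp_le_measure_lt_card_filter_mem (hT : ∀ i, Measurable (T i))
    (hindep : iIndepFun T μ) (hG : MeasurableSet G) {p t : ℝ} (hp : ∀ i, p ≤ μ.real (T i ⁻¹' G))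
    (ht : 0 ≤ t) :
    ENNReal.ofReal (1 - exp (-2 * t ^ 2 * Fintype.card ι)) ≤
      μ {ω | (p - t) * Fintype.card ι < #{i | T i ω ∈ G}} := by
  set B := {ω | #{i | T i ω ∈ G} ≤ (p - t) * Fintype.card ι}
  have hB : MeasurableSet B := by
    refine measurableSet_le ?_ measurable_const
    simp_rw [natCast_card_filter]
    exact Finset.measurable_sum _ fun i _ => measurable_const.ite (hT i hG) measurable_const
  have hBc : Bᶜ = {ω | (p - t) * Fintype.card ι < #{i | T i ω ∈ G}} := by
    ext ω
    simp [B]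
  calc ENNReal.ofReal (1 - exp (-2 * t ^ 2 * Fintype.card ι)) ≤ ENNReal.ofReal (μ.real Bᶜ) := by
        rw [probReal_compl_eq_one_sub hB]
        exact ENNReal.ofReal_le_ofReal
          (by linarith [measureReal_card_filter_mem_le_le hT hindep hG hp ht])
    _ = μ {ω | (p - t) * Fintype.card ι < #{i | T i ω ∈ G}} := by rw [ofReal_measureReal, hBc]

end ProbabilityTheory.iIndepFun

theorem median_boosting_general
    {Ω : Type*} [MeasureSpace Ω] [IsProbabilityMeasure (ℙ : Measure Ω)]
    (θ r α : ℝ) (hα : α ∈ Set.Ioo (0 : ℝ) 1)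
    {q : ℕ} (hq : 8 * Real.log (1 / α) ≤ q)
    (T : Fin q → Ω → ℝ) (hmeas : ∀ i, Measurable (T i))
    (hindep : iIndepFun T ℙ)
    (hgood : ∀ i, (3 / 4 : ENNReal) ≤ ℙ {ω | |T i ω - θ| ≤ r})
    (Tmed : Ω → ℝ)
    (hmed : ∀ ω, Tmed ω =
      (((Finset.univ : Finset (Fin q)).val.map (fun i => T i ω)).sort (· ≤ ·)).getD
        ((q + 1) / 2 - 1) 0) :
    ENNReal.ofReal (1 - α) ≤ ℙ {ω | |Tmed ω - θ| ≤ r} := by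
  have habs (x : ℝ) : |x - θ| ≤ r ↔ x ∈ Set.Icc (θ - r) (θ + r) := by
    rw [← Real.closedBall_eq_Icc, Metric.mem_closedBall, Real.dist_eq]
  set G := Set.Icc (θ - r) (θ + r)
  have hsucc (i : Fin q) : 3 / 4 ≤ (ℙ : Measure Ω).real (T i ⁻¹' G) := by
    rw [show T i ⁻¹' G = {ω | |T i ω - θ| ≤ r} from Set.ext fun ω => (habs _).symm,
      measureReal_def]
    exact (ENNReal.toReal_mono (measure_ne_top _ _) (hgood i)).trans_eq' (by norm_num)
  have hexp : exp (-2 * (1 / 4) ^ 2 * Fintype.card (Fin q)) ≤ α := by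
    rw [← Real.exp_log hα.1, Real.exp_le_exp, Fintype.card_fin]
    rw [one_div, Real.log_inv] at hq
    linarith
  have hmajority : {ω | ((3 : ℝ) / 4 - 1 / 4) * Fintype.card (Fin q) < #{i | T i ω ∈ G}} ⊆
      {ω | |Tmed ω - θ| ≤ r} := by
    intro ω hω
    rw [Set.mem_ofPred_eq, Fintype.card_fin] at hω
    rw [Set.mem_ofPred_eq, hmed, habs]
    exact median_mem_Icc_of_lt_two_mul_card _ _
      (by exact_mod_cast (by linarith : (q : ℝ) < 2 * #{i | T i ω ∈ G}))
  calc ENNReal.ofReal (1 - α)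
      ≤ ENNReal.ofReal (1 - exp (-2 * (1 / 4) ^ 2 * Fintype.card (Fin q))) :=
        ENNReal.ofReal_le_ofReal (by linarith)
    _ ≤ _ := hindep.ofReal_one_sub_exp_le_measure_lt_card_filter_mem hmeas measurableSet_Icc hsucc
        (by norm_num)
    _ ≤ _ := measure_mono hmajority

/-- Median boosting: if `T_1,…,T_q` are independent estimators, each
within `r` of `θ` with probability at least `3/4`, and `q` is odd with
`q ≥ 8 log(1/α)`, then their median is within `r` of `θ` with probability at
least `1 − α`. -/
theorem median_boosting
    {Ω : Type*} [MeasureSpace Ω] [IsProbabilityMeasure (ℙ : Measure Ω)]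
    (θ r α : ℝ) (hr : 0 < r) (hα : α ∈ Set.Ioo (0 : ℝ) 1)
    {q : ℕ} (hq0 : 0 < q) (hodd : Odd q) (hq : 8 * Real.log (1 / α) ≤ q)
    (T : Fin q → Ω → ℝ) (hmeas : ∀ i, Measurable (T i))
    (hindep : iIndepFun T ℙ)
    (hgood : ∀ i, (3 / 4 : ENNReal) ≤ ℙ {ω | |T i ω - θ| ≤ r})
    (Tmed : Ω → ℝ)
    (hmed : ∀ ω, Tmed ω =
      (((Finset.univ : Finset (Fin q)).val.map (fun i => T i ω)).sort (· ≤ ·)).getD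
        ((q + 1) / 2 - 1) 0) :
    ENNReal.ofReal (1 - α) ≤ ℙ {ω | |Tmed ω - θ| ≤ r} :=
  median_boosting_general θ r α hα hq T hmeas hindep hgood Tmed hmed
end

section
/- Let S_1,…,S_M be i.i.d. uniformly random k-element subsets of [n], independent of X_1,…,X_n, and let θ̂_ss = (1/M)·Σ_{j=1}^{M} h(X_{S_j}). Then Var(θ̂_ss) = (1 − 1/M)·Var(U_n) + ζ_k/M, where ζ_k = Var(h(X_1,…,X_k)). -/
/-!
Write `Y_j = h(X_{S_j})`. Conditionally on `S_j = t` the data are untouched, so `Y_j` is a uniform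
mixture of the laws of the `h(X_t)`, all equal to the law of `h(X_1, …, X_k)`: `Var Y_j = ζ_k`.
For `j ≠ j'` the pair `(S_j, S_j')` is uniform on pairs of `k`-subsets and independent of the
data, so `E[(Y_j - m)(Y_j' - m)]` averages `(h(X_t) - m)(h(X_t') - m)` over all pairs `(t, t')`,
which is `E[(U_n - m)²]`: `Cov(Y_j, Y_j') = Var U_n`. The variance of the mean of `M` variables
with common variance `ζ_k` and common covariance `Var U_n` is `(1 - 1/M) Var U_n + ζ_k / M`.
-/

open MeasureTheory ProbabilityTheory Finset

instance Finset.instMeasurableSpaceOfDiscrete (α : Type*) : MeasurableSpace (Finset α) := ⊤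

lemma sum_indicator_preimage_singleton {Ω α E : Type*} [AddCommMonoid E] [DecidableEq α]
    {S : Ω → α} {A : Finset α} (hSA : ∀ ω, S ω ∈ A) (G : α → Ω → E) :
    (fun ω => G (S ω) ω) = fun ω => ∑ a ∈ A, (S ⁻¹' {a}).indicator (G a) ω := by
  ext ω
  rw [sum_eq_single_of_mem (S ω) (hSA ω) fun a _ ha => by simp [Ne.symm ha]]
  simp

namespace ProbabilityTheory

variable {Ω α β : Type*} [MeasurableSpace Ω] {μ : Measure Ω}

structure IsUniformOn (S : Ω → α) (A : Finset α) (μ : Measure Ω) : Prop where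
  mem : ∀ ω, S ω ∈ A
  measureReal_preimage_singleton : ∀ a ∈ A, μ.real (S ⁻¹' {a}) = (#A : ℝ)⁻¹

lemma IsUniformOn.prodMk {γ : Type*} [MeasurableSpace α] [MeasurableSingletonClass α]
    [MeasurableSpace γ] [MeasurableSingletonClass γ] {S : Ω → α} {T : Ω → γ}
    {A : Finset α} {B : Finset γ} (hST : IndepFun S T μ)
    (hS : IsUniformOn S A μ) (hT : IsUniformOn T B μ) :
    IsUniformOn (fun ω => (S ω, T ω)) (A ×ˢ B) μ where
  mem ω := mem_product.mpr ⟨hS.mem ω, hT.mem ω⟩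
  measureReal_preimage_singleton p hp := by
    obtain ⟨ha, hb⟩ := mem_product.mp hp
    have hpre : (fun ω => (S ω, T ω)) ⁻¹' {p} = S ⁻¹' {p.1} ∩ T ⁻¹' {p.2} := by
      ext ω; simp [Prod.ext_iff]
    rw [hpre, measureReal_def, hST.measure_inter_preimage_eq_mul _ _
      (measurableSet_singleton _) (measurableSet_singleton _), ENNReal.toReal_mul,
      ← measureReal_def, ← measureReal_def, hS.measureReal_preimage_singleton _ ha,
      hT.measureReal_preimage_singleton _ hb, card_product, Nat.cast_mul, mul_inv]

variable [MeasurableSpace α] [MeasurableSingletonClass α] [MeasurableSpace β]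
  {S : Ω → α} {Z : Ω → β} {A : Finset α}

lemma IndepFun.integral_comp_of_isUniformOn (hSZ : IndepFun S Z μ) (hS : Measurable S)
    (hZ : AEMeasurable Z μ) (hU : IsUniformOn S A μ) {F : α → β → ℝ}
    (hF : ∀ a, Measurable (F a)) (hFi : ∀ a ∈ A, Integrable (fun ω => F a (Z ω)) μ) :
    ∫ ω, F (S ω) (Z ω) ∂μ = ∫ ω, (#A : ℝ)⁻¹ * ∑ a ∈ A, F a (Z ω) ∂μ := by
  classical
  have hpiece : ∀ a ∈ A, ∫ ω, (S ⁻¹' {a}).indicator (fun ω => F a (Z ω)) ω ∂μ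
      = (#A : ℝ)⁻¹ * ∫ ω, F a (Z ω) ∂μ := by
    intro a ha
    have hind : (S ⁻¹' {a}).indicator (fun ω => F a (Z ω))
        = fun ω => ({a} : Set α).indicator 1 (S ω) * F a (Z ω) := by
      ext ω; by_cases h : S ω = a <;> simp [h]
    rw [hind, hSZ.integral_fun_comp_mul_comp hS.aemeasurable hZ
      (measurable_one.indicator (measurableSet_singleton a)).aestronglyMeasurable
      (hF a).aestronglyMeasurable, ← hU.measureReal_preimage_singleton a ha,
      ← integral_indicator_one (hS (measurableSet_singleton a))]
    rfl
  rw [sum_indicator_preimage_singleton hU.mem (fun a ω => F a (Z ω)), integral_finsetSum _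
      fun a ha => (hFi a ha).indicator (hS (measurableSet_singleton a)),
    integral_const_mul, integral_finsetSum _ hFi, mul_sum]
  exact sum_congr rfl hpiece

lemma IndepFun.identDistrib_comp_of_isUniformOn [IsProbabilityMeasure μ] {Ω' : Type*}
    [MeasurableSpace Ω'] {ν : Measure Ω'} [IsProbabilityMeasure ν] {W : Ω' → ℝ}
    (hSZ : IndepFun S Z μ) (hS : Measurable S) (hZ : AEMeasurable Z μ)
    (hU : IsUniformOn S A μ) {F : α → β → ℝ} (hF : ∀ a, Measurable (F a))
    (hFW : ∀ a ∈ A, IdentDistrib (fun ω => F a (Z ω)) W μ ν) :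
    IdentDistrib (fun ω => F (S ω) (Z ω)) W μ ν := by
  classical
  obtain ⟨a₀, ha₀⟩ : A.Nonempty :=
    ⟨_, hU.mem (nonempty_of_isProbabilityMeasure μ).some⟩
  have hY : AEMeasurable (fun ω => F (S ω) (Z ω)) μ := by
    rw [sum_indicator_preimage_singleton hU.mem (fun a ω => F a (Z ω))]
    exact Finset.aemeasurable_fun_sum _ fun a _ =>
      ((hF a).comp_aemeasurable hZ).indicator (hS (measurableSet_singleton a))
  refine ⟨hY, (hFW a₀ ha₀).aemeasurable_snd, Measure.ext fun B hB => ?_⟩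
  have hmap : ∀ {Y : Ω → ℝ}, AEMeasurable Y μ →
      (μ.map Y).real B = ∫ ω, B.indicator 1 (Y ω) ∂μ := fun hY => by
    rw [← integral_map hY (measurable_one.indicator hB).aestronglyMeasurable,
      integral_indicator_one hB]
  have hindInt : ∀ a, Integrable (fun ω => B.indicator 1 (F a (Z ω))) μ := fun a =>
    Integrable.of_mem_Icc 0 1
      ((measurable_one.indicator hB).comp_aemeasurable ((hF a).comp_aemeasurable hZ))
      (ae_of_all _ fun ω => by by_cases h : F a (Z ω) ∈ B <;> simp [h])
  have hA : (#A : ℝ) ≠ 0 := Nat.cast_ne_zero.mpr (card_ne_zero_of_mem ha₀)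
  have hlaw : (μ.map fun ω => F (S ω) (Z ω)).real B = (ν.map W).real B := calc
    _ = ∫ ω, (#A : ℝ)⁻¹ * ∑ a ∈ A, B.indicator 1 (F a (Z ω)) ∂μ := by
      rw [hmap hY]
      exact hSZ.integral_comp_of_isUniformOn hS hZ hU (F := fun a z => B.indicator 1 (F a z))
        (fun a => (measurable_one.indicator hB).comp (hF a)) fun a _ => hindInt a
    _ = (#A : ℝ)⁻¹ * ∑ _a ∈ A, (ν.map W).real B := by
      rw [integral_const_mul, integral_finsetSum _ fun a _ => hindInt a]
      refine congrArg _ (sum_congr rfl fun a ha => ?_)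
      rw [← hmap (hFW a ha).aemeasurable_fst, (hFW a ha).map_eq]
    _ = (ν.map W).real B := by rw [sum_const, nsmul_eq_mul, inv_mul_cancel_left₀ hA]
  exact (ENNReal.toReal_eq_toReal_iff' (measure_ne_top _ _) (measure_ne_top _ _)).mp hlaw

lemma iIndepFun.identDistrib_of_injective [IsProbabilityMeasure μ] {ι κ 𝒳 : Type*}
    [Fintype κ] [MeasurableSpace 𝒳] {X : ι → Ω → 𝒳} (hindep : iIndepFun X μ)
    (hident : ∀ i j, IdentDistrib (X i) (X j) μ μ) {f g : κ → ι}
    (hf : f.Injective) (hg : g.Injective) :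
    IdentDistrib (fun ω i => X (f i) ω) (fun ω i => X (g i) ω) μ μ := by
  have hX : ∀ i, AEMeasurable (X i) μ := fun i => (hident i i).aemeasurable_fst
  refine ⟨aemeasurable_pi_lambda _ fun i => hX _, aemeasurable_pi_lambda _ fun i => hX _, ?_⟩
  rw [(iIndepFun_iff_map_fun_eq_pi_map fun i => hX (f i)).mp (hindep.precomp hf),
    (iIndepFun_iff_map_fun_eq_pi_map fun i => hX (g i)).mp (hindep.precomp hg)]
  exact congrArg Measure.pi (funext fun i => (hident (f i) (g i)).map_eq)

lemma variance_average_eq [IsFiniteMeasure μ] {ι : Type*} [Fintype ι] [Nonempty ι]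
    {Y : ι → Ω → ℝ} (hY : ∀ i, MemLp (Y i) 2 μ) {v c : ℝ}
    (hvar : ∀ i, Var[Y i; μ] = v)
    (hcov : ∀ i j, i ≠ j → cov[Y i, Y j; μ] = c) :
    Var[fun ω => (Fintype.card ι : ℝ)⁻¹ * ∑ i, Y i ω; μ]
      = (1 - 1 / (Fintype.card ι : ℝ)) * c + v / Fintype.card ι := by
  classical
  have hrow : ∀ i, ∑ j, cov[Y i, Y j; μ] = v + (Fintype.card ι - 1) * c := by
    intro i
    rw [← add_sum_erase _ _ (mem_univ i), covariance_self (hY i).aemeasurable, hvar,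
      sum_congr rfl fun j hj => hcov i j (ne_of_mem_erase hj).symm, sum_const,
      card_erase_of_mem (mem_univ i), card_univ, nsmul_eq_mul,
      Nat.cast_sub Fintype.card_pos, Nat.cast_one]
  have hcard : (Fintype.card ι : ℝ) ≠ 0 := Nat.cast_ne_zero.mpr Fintype.card_ne_zero
  rw [variance_const_mul,
    ← covariance_self (aemeasurable_fun_sum _ fun i _ => (hY i).aemeasurable),
    covariance_fun_sum_fun_sum hY hY, sum_congr rfl fun i _ => hrow i, sum_const, card_univ,
    nsmul_eq_mul]
  field_simp
  ring

lemma IndepFun.covariance_comp_of_isUniformOn [IsProbabilityMeasure μ] {T : Ω → α}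
    (hST : IndepFun S T μ) (hSTZ : IndepFun (fun ω => (S ω, T ω)) Z μ) (hS : Measurable S)
    (hT : Measurable T) (hZ : AEMeasurable Z μ) (hSU : IsUniformOn S A μ)
    (hTU : IsUniformOn T A μ) {F : α → β → ℝ} (hF : ∀ a, Measurable (F a))
    (hF2 : ∀ a ∈ A, MemLp (fun ω => F a (Z ω)) 2 μ) :
    cov[fun ω => F (S ω) (Z ω), fun ω => F (T ω) (Z ω); μ]
      = Var[fun ω => (#A : ℝ)⁻¹ * ∑ a ∈ A, F a (Z ω); μ] := by
  have hSZ : IndepFun S Z μ := hSTZ.comp measurable_fst measurable_id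
  have hTZ : IndepFun T Z μ := hSTZ.comp measurable_snd measurable_id
  have hFi : ∀ a ∈ A, Integrable (fun ω => F a (Z ω)) μ :=
    fun a ha => (hF2 a ha).integrable one_le_two
  set m := ∫ ω, (#A : ℝ)⁻¹ * ∑ a ∈ A, F a (Z ω) ∂μ
  obtain ⟨a₀, ha₀⟩ : A.Nonempty :=
    ⟨_, hSU.mem (nonempty_of_isProbabilityMeasure μ).some⟩
  have hA : (#A : ℝ) ≠ 0 := Nat.cast_ne_zero.mpr (card_ne_zero_of_mem ha₀)
  -- The centred product is a function of the pair `(S, T)`, which is uniform on `A ×ˢ A`.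
  have hsq : ∀ z, (#(A ×ˢ A) : ℝ)⁻¹ * ∑ p ∈ A ×ˢ A, (F p.1 z - m) * (F p.2 z - m)
      = ((#A : ℝ)⁻¹ * ∑ a ∈ A, F a z - m) ^ 2 := by
    intro z
    simp only [sum_product, card_product, Nat.cast_mul, ← sum_mul_sum, sum_sub_distrib, sum_const,
      nsmul_eq_mul]
    field_simp
  rw [covariance, hSZ.integral_comp_of_isUniformOn hS hZ hSU hF hFi,
    hTZ.integral_comp_of_isUniformOn hT hZ hTU hF hFi,
    hSTZ.integral_comp_of_isUniformOn (F := fun p z => (F p.1 z - m) * (F p.2 z - m))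
      (hS.prodMk hT) hZ (hSU.prodMk hST hTU)
      (fun p => ((hF p.1).sub_const m).mul ((hF p.2).sub_const m))
      (fun p hp => ((hF2 _ (mem_product.mp hp).1).sub (memLp_const m)).integrable_mul
        ((hF2 _ (mem_product.mp hp).2).sub (memLp_const m))),
    variance_eq_integral ((memLp_finsetSum _ hF2).const_mul _).aemeasurable]
  exact integral_congr_ae (ae_of_all _ fun ω => hsq (Z ω))

end ProbabilityTheory

/-- The paper's `h(x_t)`; the value `0` when `#t ≠ k` is a junk value. -/
noncomputable def kernelOn {𝒳 : Type*} {n k : ℕ} (h : (Fin k → 𝒳) → ℝ)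
    (t : Finset (Fin n)) (x : Fin n → 𝒳) : ℝ :=
  if ht : #t = k then h fun i => x (t.orderIsoOfFin ht i) else 0

section kernelOn

variable {𝒳 : Type*} [MeasurableSpace 𝒳] {n k : ℕ} {h : (Fin k → 𝒳) → ℝ}

omit [MeasurableSpace 𝒳] in
lemma kernelOn_of_card_eq {t : Finset (Fin n)} (ht : #t = k) (x : Fin n → 𝒳) :
    kernelOn h t x = h fun i => x (t.orderIsoOfFin ht i) :=
  dif_pos ht

lemma measurable_kernelOn (hmeas : Measurable h) (t : Finset (Fin n)) :
    Measurable (kernelOn h t) := by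
  unfold kernelOn
  split_ifs
  · exact hmeas.comp (measurable_pi_lambda _ fun i => measurable_pi_apply _)
  · exact measurable_const

lemma identDistrib_kernelOn {Ω : Type*} [MeasurableSpace Ω] {μ : Measure Ω}
    [IsProbabilityMeasure μ] {X : Fin n → Ω → 𝒳} (hindep : iIndepFun X μ)
    (hident : ∀ i j, IdentDistrib (X i) (X j) μ μ) (hmeas : Measurable h)
    {t : Finset (Fin n)} (ht : #t = k) {f : Fin k → Fin n} (hf : f.Injective) :
    IdentDistrib (fun ω => kernelOn h t fun i => X i ω) (fun ω => h fun i => X (f i) ω)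
      μ μ := by
  simp only [kernelOn_of_card_eq ht]
  exact (hindep.identDistrib_of_injective hident
    (Subtype.val_injective.comp (t.orderIsoOfFin ht).injective) hf).comp hmeas

omit [MeasurableSpace 𝒳] in
lemma sum_attach_powersetCard_eq_sum_kernelOn (x : Fin n → 𝒳) :
    ∑ T ∈ (powersetCard k (univ : Finset (Fin n))).attach,
        h (fun i => x (T.1.orderIsoOfFin (mem_powersetCard.mp T.2).2 i))
      = ∑ t ∈ powersetCard k univ, kernelOn h t x := by
  rw [← sum_attach (powersetCard k univ) fun t => kernelOn h t x]
  exact sum_congr rfl fun T _ => (kernelOn_of_card_eq (mem_powersetCard.mp T.2).2 x).symm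

end kernelOn

lemma isUniformOn_powersetCard {Ω : Type*} [MeasurableSpace Ω] {μ : Measure Ω} {n k : ℕ}
    {S : Ω → Finset (Fin n)} (hcard : ∀ ω, #(S ω) = k)
    (hunif : ∀ s : Finset (Fin n), #s = k → μ {ω | S ω = s} = (n.choose k : ENNReal)⁻¹) :
    IsUniformOn S (powersetCard k univ) μ where
  mem ω := mem_powersetCard_univ.mpr (hcard ω)
  measureReal_preimage_singleton t ht := by
    rw [card_powersetCard, card_univ, Fintype.card_fin, measureReal_def, ← ENNReal.toReal_natCast,
      ← ENNReal.toReal_inv, ← hunif t (mem_powersetCard_univ.mp ht)]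
    rfl

theorem subsampled_ustat_variance_general
    {Ω 𝒳 : Type*} [MeasureSpace Ω] [IsProbabilityMeasure (ℙ : Measure Ω)]
    [MeasurableSpace 𝒳]
    {n k : ℕ} (hkn : k ≤ n)
    (X : Fin n → Ω → 𝒳)
    (hindep : iIndepFun X ℙ)
    (hident : ∀ i j, IdentDistrib (X i) (X j) ℙ ℙ)
    (h : (Fin k → 𝒳) → ℝ) (hmeas : Measurable h)
    (hL2 : MemLp (fun ω => h (fun i => X (Fin.castLE hkn i) ω)) 2 ℙ)
    (ζk : ℝ) (hζk : ζk = variance (fun ω => h (fun i => X (Fin.castLE hkn i) ω)) ℙ)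
    {M : ℕ} (hM : 1 ≤ M)
    (S : Fin M → Ω → Finset (Fin n)) (hSmeas : ∀ j, Measurable (S j))
    (hScard : ∀ j ω, (S j ω).card = k)
    (hSunif : ∀ j, ∀ s : Finset (Fin n), s.card = k →
      ℙ {ω | S j ω = s} = ((n.choose k : ENNReal))⁻¹)
    (hSindep : iIndepFun S ℙ)
    (hSX : IndepFun (fun ω j => S j ω) (fun ω i => X i ω) ℙ)
    (U : Ω → ℝ)
    (hU : ∀ ω, U ω = (n.choose k : ℝ)⁻¹ *
      ∑ T ∈ (Finset.powersetCard k (Finset.univ : Finset (Fin n))).attach,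
        h (fun j => X (↑(T.1.orderIsoOfFin (Finset.mem_powersetCard.mp T.2).2 j)) ω))
    (θhat : Ω → ℝ)
    (hθhat : ∀ ω, θhat ω = (M : ℝ)⁻¹ *
      ∑ j : Fin M, h (fun i => X (↑((S j ω).orderIsoOfFin (hScard j ω) i)) ω)) :
    variance θhat ℙ = (1 - 1 / (M : ℝ)) * variance U ℙ + ζk / M := by
  set P := powersetCard k (univ : Finset (Fin n))
  have hP : (#P : ℝ) = n.choose k := by simp [P]
  set Z : Ω → Fin n → 𝒳 := fun ω i => X i ω
  set Y : Fin M → Ω → ℝ := fun j ω => kernelOn h (S j ω) (Z ω)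
  have hZ : AEMeasurable Z ℙ := aemeasurable_pi_lambda _ fun i => (hident i i).aemeasurable_fst
  have hθ : θhat = fun ω => (Fintype.card (Fin M) : ℝ)⁻¹ * ∑ j, Y j ω := by
    ext ω
    rw [hθhat, Fintype.card_fin]
    exact congrArg _ (sum_congr rfl fun j _ =>
      (kernelOn_of_card_eq (h := h) (hScard j ω) (Z ω)).symm)
  have hU' : U = fun ω => (#P : ℝ)⁻¹ * ∑ t ∈ P, kernelOn h t (Z ω) := by
    ext ω
    rw [hU, hP]
    exact congrArg _ (sum_attach_powersetCard_eq_sum_kernelOn (Z ω))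
  have hunif : ∀ j, IsUniformOn (S j) P ℙ := fun j =>
    isUniformOn_powersetCard (hScard j) (hSunif j)
  have hlaw : ∀ t ∈ P, IdentDistrib (fun ω => kernelOn h t (Z ω))
      (fun ω => h fun i => X (Fin.castLE hkn i) ω) ℙ ℙ := fun t ht =>
    identDistrib_kernelOn hindep hident hmeas (mem_powersetCard_univ.mp ht)
      (Fin.castLE_injective hkn)
  have hY : ∀ j, IdentDistrib (Y j) (fun ω => h fun i => X (Fin.castLE hkn i) ω) ℙ ℙ :=
    fun j => (hSX.comp (measurable_pi_apply j) measurable_id).identDistrib_comp_of_isUniformOn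
      (hSmeas j) hZ (hunif j) (measurable_kernelOn hmeas) hlaw
  have hcov : ∀ j j', j ≠ j' → cov[Y j, Y j'; ℙ] = Var[U; ℙ] := fun j j' hjj' => by
    rw [hU']
    exact (hSindep.indepFun hjj').covariance_comp_of_isUniformOn
      (hSX.comp (measurable_pi_apply j |>.prodMk (measurable_pi_apply j')) measurable_id)
      (hSmeas j) (hSmeas j') hZ (hunif j) (hunif j') (measurable_kernelOn hmeas)
      fun t ht => (hlaw t ht).symm.memLp_snd hL2
  have : Nonempty (Fin M) := ⟨⟨0, hM⟩⟩
  rw [hθ, variance_average_eq (fun j => (hY j).symm.memLp_snd hL2)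
    (fun j => (hY j).variance_eq.trans hζk.symm) hcov, Fintype.card_fin]

/-- Variance of the subsampled U-statistic estimator:
if `S_1,…,S_M` are i.i.d. uniform `k`-subsets of `[n]`, independent of the data, then
`Var(θ̂_ss) = (1 − 1/M)·Var(U_n) + ζ_k/M`. -/
theorem subsampled_ustat_variance
    {Ω 𝒳 : Type*} [MeasureSpace Ω] [IsProbabilityMeasure (ℙ : Measure Ω)]
    [MeasurableSpace 𝒳]
    {n k : ℕ} (hk : 1 ≤ k) (hkn : k ≤ n)
    (X : Fin n → Ω → 𝒳) (hXmeas : ∀ i, Measurable (X i))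
    (hindep : iIndepFun X ℙ)
    (hident : ∀ i j, IdentDistrib (X i) (X j) ℙ ℙ)
    (h : (Fin k → 𝒳) → ℝ) (hmeas : Measurable h)
    (hsymm : ∀ (σ : Equiv.Perm (Fin k)) (y : Fin k → 𝒳), h (y ∘ σ) = h y)
    (hL2 : MemLp (fun ω => h (fun i => X (Fin.castLE hkn i) ω)) 2 ℙ)
    (ζk : ℝ) (hζk : ζk = variance (fun ω => h (fun i => X (Fin.castLE hkn i) ω)) ℙ)
    {M : ℕ} (hM : 1 ≤ M)
    (S : Fin M → Ω → Finset (Fin n)) (hSmeas : ∀ j, Measurable (S j))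
    (hScard : ∀ j ω, (S j ω).card = k)
    (hSunif : ∀ j, ∀ s : Finset (Fin n), s.card = k →
      ℙ {ω | S j ω = s} = ((n.choose k : ENNReal))⁻¹)
    (hSindep : iIndepFun S ℙ)
    (hSX : IndepFun (fun ω j => S j ω) (fun ω i => X i ω) ℙ)
    (U : Ω → ℝ)
    (hU : ∀ ω, U ω = (n.choose k : ℝ)⁻¹ *
      ∑ T ∈ (Finset.powersetCard k (Finset.univ : Finset (Fin n))).attach,
        h (fun j => X (↑(T.1.orderIsoOfFin (Finset.mem_powersetCard.mp T.2).2 j)) ω))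
    (θhat : Ω → ℝ)
    (hθhat : ∀ ω, θhat ω = (M : ℝ)⁻¹ *
      ∑ j : Fin M, h (fun i => X (↑((S j ω).orderIsoOfFin (hScard j ω) i)) ω)) :
    variance θhat ℙ = (1 - 1 / (M : ℝ)) * variance U ℙ + ζk / M :=
  subsampled_ustat_variance_general hkn X hindep hident h hmeas hL2 ζk hζk hM S hSmeas hScard hSunif
    hSindep hSX U hU θhat hθhat
end

section
/- Let X = (X_1,…,X_n) and X' = (X'_1,…,X'_n) be two elements of 𝒳^n that agree in all coordinates except possibly i*. Suppose M_i > 0 and M_i/M ≤ 2k/n for all i, and M_{ij}/M_i ≤ 2k/n for all i ≠ j. Then: (a) |A_n(X) − A_n(X')| ≤ 2kC/n; (b) for every i ≠ i*, |ĥ_X(i) − ĥ_{X'}(i)| ≤ 2kC/n; and (c) |L_X − L_{X'}| ≤ 1. -/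
open Finset

/-!
Every summand `h(X_S)` with `i* ∉ S` is the same for both datasets, and every other summand
moves by at most `C`. So an average over a family of blocks moves by at most `C` times the
fraction of those blocks that contain `i*`, which is `M_{i*}/M` for `A_n` and `M_{i i*}/M_i` for
`ĥ(i)`; both fractions are at most `2k/n`. For `L`, the scores `|ĥ(i) − A_n|` then move by at
most `2 · 2kC/n` off `i*`, while raising `t` by one raises the threshold by `3 · 2kC/n`; hence the
count of exceedances at level `t + 1` for one dataset is at most one (for `i*`) more than the
count at level `t` for the other, and the least admissible levels differ by at most one.
-/

theorem abs_inv_mul_sum_sub_inv_mul_sum_le {ι : Type*} (F : Finset ι) (p : ι → Prop)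
    [DecidablePred p] {f g : ι → ℝ} {c C r : ℝ} (hc : 0 ≤ c) (hC : 0 ≤ C)
    (hfg : ∀ j ∈ F, ¬ p j → f j = g j) (hjump : ∀ j ∈ F, |f j - g j| ≤ C)
    (hratio : (#(F.filter p) : ℝ) / c ≤ r) :
    |c⁻¹ * ∑ j ∈ F, f j - c⁻¹ * ∑ j ∈ F, g j| ≤ r * C := by
  have hsum : ∑ j ∈ F, (f j - g j) = ∑ j ∈ F.filter p, (f j - g j) :=
    (sum_filter_of_ne fun j hj hne => not_not.1 fun hp => hne (sub_eq_zero.2 (hfg j hj hp))).symm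
  have hbound : |∑ j ∈ F.filter p, (f j - g j)| ≤ #(F.filter p) * C := by
    rw [← nsmul_eq_mul]
    exact (abs_sum_le_sum_abs _ _).trans
      (sum_le_card_nsmul _ _ C fun j hj => hjump j (mem_filter.1 hj).1)
  calc |c⁻¹ * ∑ j ∈ F, f j - c⁻¹ * ∑ j ∈ F, g j|
      = c⁻¹ * |∑ j ∈ F.filter p, (f j - g j)| := by
        rw [← mul_sub, ← sum_sub_distrib, hsum, abs_mul, abs_of_nonneg (inv_nonneg.2 hc)]
    _ ≤ c⁻¹ * (#(F.filter p) * C) := mul_le_mul_of_nonneg_left hbound (inv_nonneg.2 hc)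
    _ = (#(F.filter p) : ℝ) / c * C := by ring
    _ ≤ r * C := mul_le_mul_of_nonneg_right hratio hC

theorem card_filter_lt_succ_le {ι : Type*} [Fintype ι] [DecidableEq ι] {s s' : ι → ℝ}
    {τ : ℕ → ℝ} {ε : ℝ} (i₀ : ι) (hs : ∀ i ≠ i₀, |s i - s' i| ≤ ε)
    (hτ : ∀ t, τ t + ε ≤ τ (t + 1)) (t : ℕ) :
    #{i | τ (t + 1) < s i} ≤ #{i | τ t < s' i} + 1 := by
  refine (card_le_card fun i hi => ?_).trans (card_insert_le i₀ _)
  rcases eq_or_ne i i₀ with rfl | hne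
  · exact mem_insert_self _ _
  · have hlt := (mem_filter.1 hi).2
    have hsi := (abs_sub_le_iff.1 (hs i hne)).1
    exact mem_insert_of_mem (mem_filter.2 ⟨mem_univ _, by linarith [hτ t]⟩)

theorem le_add_one_of_isLeast {N L L' : ℕ} {f g : ℕ → ℕ} (hfg : ∀ t, f (t + 1) ≤ g t + 1)
    (hL : IsLeast {t | 1 ≤ t ∧ t ≤ N ∧ f t ≤ t} L)
    (hL' : IsLeast {t | 1 ≤ t ∧ t ≤ N ∧ g t ≤ t} L') :
    L ≤ L' + 1 := by
  obtain ⟨⟨-, -, hgL'⟩, -⟩ := hL'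
  rcases lt_or_ge L' N with hlt | hge
  · exact hL.2 ⟨by omega, hlt, (hfg L').trans (by omega)⟩
  · exact hL.1.2.1.trans (by omega)

theorem abs_sub_le_one_of_isLeast_card_filter_lt {ι : Type*} [Fintype ι] [DecidableEq ι]
    {N L L' : ℕ} {s s' : ι → ℝ} {τ : ℕ → ℝ} {ε : ℝ} (i₀ : ι)
    (hs : ∀ i ≠ i₀, |s i - s' i| ≤ ε) (hτ : ∀ t, τ t + ε ≤ τ (t + 1))
    (hL : IsLeast {t | 1 ≤ t ∧ t ≤ N ∧ #{i | τ t < s i} ≤ t} L)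
    (hL' : IsLeast {t | 1 ≤ t ∧ t ≤ N ∧ #{i | τ t < s' i} ≤ t} L') :
    |(L : ℤ) - L'| ≤ 1 := by
  have hs' : ∀ i ≠ i₀, |s' i - s i| ≤ ε := fun i hi => abs_sub_comm (s i) _ ▸ hs i hi
  have h₁ := le_add_one_of_isLeast (card_filter_lt_succ_le i₀ hs hτ) hL hL'
  have h₂ := le_add_one_of_isLeast (card_filter_lt_succ_le i₀ hs' hτ) hL' hL
  rw [abs_le]
  omega

theorem local_hajek_sensitivity_general
    {𝒳 : Type*} {n k M : ℕ}
    (h : (Fin k → 𝒳) → ℝ)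
    (C : ℝ)
    (hrange : ∀ y y' : Fin k → 𝒳, h y - h y' ≤ C)
    (𝒮 : Fin M → Finset (Fin n)) (hcard : ∀ j, (𝒮 j).card = k)
    (Mi : Fin n → ℕ)
    (hMi : ∀ i, Mi i = ((Finset.univ : Finset (Fin M)).filter (fun j => i ∈ 𝒮 j)).card)
    (hMiM : ∀ i, (Mi i : ℝ) / M ≤ 2 * k / n)
    (hMij : ∀ i i' : Fin n, i ≠ i' →
      ((((Finset.univ : Finset (Fin M)).filter (fun j => i ∈ 𝒮 j ∧ i' ∈ 𝒮 j)).card : ℝ)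
          / Mi i ≤ 2 * k / n))
    (A : (Fin n → 𝒳) → ℝ)
    (hA : ∀ x, A x = (M : ℝ)⁻¹ *
      ∑ j : Fin M, h (fun i => x (↑((𝒮 j).orderIsoOfFin (hcard j) i))))
    (Hhat : (Fin n → 𝒳) → Fin n → ℝ)
    (hHhat : ∀ x i, Hhat x i = (Mi i : ℝ)⁻¹ *
      ∑ j ∈ (Finset.univ : Finset (Fin M)).filter (fun j => i ∈ 𝒮 j),
        h (fun l => x (↑((𝒮 j).orderIsoOfFin (hcard j) l))))
    (ξ : ℝ)
    (Xd X' : Fin n → 𝒳) (istar : Fin n)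
    (hagree : ∀ i, i ≠ istar → Xd i = X' i)
    (L L' : ℕ)
    (hL : IsLeast {t : ℕ | 1 ≤ t ∧ t ≤ n ∧
      (((Finset.univ : Finset (Fin n)).filter
        (fun i => ξ + 6 * k * C * t / n < |Hhat Xd i - A Xd|)).card ≤ t)} L)
    (hL' : IsLeast {t : ℕ | 1 ≤ t ∧ t ≤ n ∧
      (((Finset.univ : Finset (Fin n)).filter
        (fun i => ξ + 6 * k * C * t / n < |Hhat X' i - A X'|)).card ≤ t)} L') :
    |A Xd - A X'| ≤ 2 * k * C / n ∧
      (∀ i, i ≠ istar → |Hhat Xd i - Hhat X' i| ≤ 2 * k * C / n) ∧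
      |(L : ℤ) - (L' : ℤ)| ≤ 1 := by
  have hC : 0 ≤ C := by simpa using hrange (fun _ => Xd istar) (fun _ => Xd istar)
  have hoff : ∀ j, istar ∉ 𝒮 j → h (fun l => Xd ((𝒮 j).orderIsoOfFin (hcard j) l)) =
      h (fun l => X' ((𝒮 j).orderIsoOfFin (hcard j) l)) := fun j hj =>
    congrArg h (funext fun l => hagree _ (ne_of_mem_of_not_mem ((𝒮 j).orderIsoOfFin _ l).2 hj))
  have hjump : ∀ j, |h (fun l => Xd ((𝒮 j).orderIsoOfFin (hcard j) l)) -
      h (fun l => X' ((𝒮 j).orderIsoOfFin (hcard j) l))| ≤ C := fun j =>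
    abs_sub_le_iff.2 ⟨hrange _ _, hrange _ _⟩
  have hAd : |A Xd - A X'| ≤ 2 * k * C / n := by
    rw [hA, hA, ← div_mul_eq_mul_div]
    exact abs_inv_mul_sum_sub_inv_mul_sum_le _ (istar ∈ 𝒮 ·) M.cast_nonneg hC
      (fun j _ => hoff j) (fun j _ => hjump j) (hMi istar ▸ hMiM istar)
  have hHd : ∀ i, i ≠ istar → |Hhat Xd i - Hhat X' i| ≤ 2 * k * C / n := fun i hi => by
    rw [hHhat, hHhat, ← div_mul_eq_mul_div]
    exact abs_inv_mul_sum_sub_inv_mul_sum_le _ (istar ∈ 𝒮 ·) (Mi i).cast_nonneg hC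
      (fun j _ => hoff j) (fun j _ => hjump j) (by rw [filter_filter]; exact hMij i istar hi)
  refine ⟨hAd, hHd, abs_sub_le_one_of_isLeast_card_filter_lt (ε := 2 * (2 * k * C / n))
    (τ := fun t : ℕ => ξ + 6 * k * C * t / n) istar (fun i hi => ?_) (fun t => ?_) hL hL'⟩
  · calc _ ≤ |(Hhat Xd i - A Xd) - (Hhat X' i - A X')| := abs_abs_sub_abs_le_abs_sub _ _
      _ = |(Hhat Xd i - Hhat X' i) - (A Xd - A X')| := by ring_nf
      _ ≤ _ := (abs_sub _ _).trans (by linarith [hHd i hi])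
  · have hδ : 0 ≤ 2 * k * C / n := (abs_nonneg _).trans hAd
    have hstep : (6 * k * C * (t + 1 : ℕ) / n : ℝ) = 6 * k * C * t / n + 3 * (2 * k * C / n) := by
      push_cast; ring
    simp only [hstep]
    linarith

/-- Deterministic sensitivity bounds for the reweighting scheme:
for adjacent datasets `X, X'` (differing only at `i*`), the empirical mean `A_n`,
the local Hájek projections at indices `i ≠ i*`, and the threshold level `L` each
have small sensitivity. -/
theorem local_hajek_sensitivity
    {𝒳 : Type*} {n k M : ℕ} (hk : 1 ≤ k) (hkn : k ≤ n) (hM : 1 ≤ M)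
    (h : (Fin k → 𝒳) → ℝ)
    (hsymm : ∀ (σ : Equiv.Perm (Fin k)) (y : Fin k → 𝒳), h (y ∘ σ) = h y)
    (C : ℝ) (hC : 0 < C)
    (hrange : ∀ y y' : Fin k → 𝒳, h y - h y' ≤ C)
    (𝒮 : Fin M → Finset (Fin n)) (hcard : ∀ j, (𝒮 j).card = k)
    (Mi : Fin n → ℕ)
    (hMi : ∀ i, Mi i = ((Finset.univ : Finset (Fin M)).filter (fun j => i ∈ 𝒮 j)).card)
    (hMipos : ∀ i, 0 < Mi i)
    (hMiM : ∀ i, (Mi i : ℝ) / M ≤ 2 * k / n)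
    (hMij : ∀ i i' : Fin n, i ≠ i' →
      ((((Finset.univ : Finset (Fin M)).filter (fun j => i ∈ 𝒮 j ∧ i' ∈ 𝒮 j)).card : ℝ)
          / Mi i ≤ 2 * k / n))
    (A : (Fin n → 𝒳) → ℝ)
    (hA : ∀ x, A x = (M : ℝ)⁻¹ *
      ∑ j : Fin M, h (fun i => x (↑((𝒮 j).orderIsoOfFin (hcard j) i))))
    (Hhat : (Fin n → 𝒳) → Fin n → ℝ)
    (hHhat : ∀ x i, Hhat x i = (Mi i : ℝ)⁻¹ *
      ∑ j ∈ (Finset.univ : Finset (Fin M)).filter (fun j => i ∈ 𝒮 j),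
        h (fun l => x (↑((𝒮 j).orderIsoOfFin (hcard j) l))))
    (ξ : ℝ) (hξ : 0 ≤ ξ)
    (Xd X' : Fin n → 𝒳) (istar : Fin n)
    (hagree : ∀ i, i ≠ istar → Xd i = X' i)
    (L L' : ℕ)
    (hL : IsLeast {t : ℕ | 1 ≤ t ∧ t ≤ n ∧
      (((Finset.univ : Finset (Fin n)).filter
        (fun i => ξ + 6 * k * C * t / n < |Hhat Xd i - A Xd|)).card ≤ t)} L)
    (hL' : IsLeast {t : ℕ | 1 ≤ t ∧ t ≤ n ∧
      (((Finset.univ : Finset (Fin n)).filter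
        (fun i => ξ + 6 * k * C * t / n < |Hhat X' i - A X'|)).card ≤ t)} L') :
    |A Xd - A X'| ≤ 2 * k * C / n ∧
      (∀ i, i ≠ istar → |Hhat Xd i - Hhat X' i| ≤ 2 * k * C / n) ∧
      |(L : ℤ) - (L' : ℤ)| ≤ 1 :=
  local_hajek_sensitivity_general h C hrange 𝒮 hcard Mi hMi hMiM hMij A hA Hhat hHhat ξ Xd X' istar
    hagree L L' hL hL'
end

section
/- For all natural numbers n, k, b with 1 ≤ k ≤ n and 0 ≤ b ≤ n, one has Σ_{a=2}^{k} (a−1)·binom(b,a)·binom(n−b,k−a) ≤ (k²b²/n²)·binom(n,k). -/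
/-!
Replacing the weight `a - 1` by `C(a, 2) ≥ a - 1` turns the sum into a double count of pairs
(k-set `T`, 2-subset of `T ∩ B`), which by Vandermonde equals `C(b, 2) · C(n - 2, k - 2)`.
Since `C(k, 2) · C(n, k) = C(n, 2) · C(n - 2, k - 2)`, the sum is at most
`C(b, 2) · C(k, 2) / C(n, 2) · C(n, k)`, and `C(b, 2) · C(k, 2) / C(n, 2) ≤ k² b² / n²`.
-/

open Finset

theorem Nat.sub_one_le_choose_two (a : ℕ) : a - 1 ≤ a.choose 2 := by
  cases a with
  | zero => simp
  | succ a => simp [Nat.choose_succ_succ]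

theorem Nat.sum_Icc_choose_sub_mul_choose_sub (p q : ℕ) {s k : ℕ} (hs : s ≤ k) :
    ∑ a ∈ Icc s k, p.choose (a - s) * q.choose (k - a) = (p + q).choose (k - s) := by
  rw [Nat.add_choose_eq, Nat.sum_antidiagonal_eq_sum_range_succ_mk, ← Ico_add_one_right_eq_Icc,
    sum_Ico_eq_sum_range, show k + 1 - s = k - s + 1 by omega]
  refine sum_congr rfl fun i _ => ?_
  rw [Nat.add_sub_cancel_left, Nat.sub_add_eq, Nat.sub_right_comm]

theorem Nat.sum_Icc_choose_two_mul_choose_mul_choose {n k b : ℕ} (hk : 2 ≤ k) (hb : b ≤ n) :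
    ∑ a ∈ Icc 2 k, a.choose 2 * b.choose a * (n - b).choose (k - a) =
      b.choose 2 * (n - 2).choose (k - 2) := by
  rcases lt_or_ge b 2 with hb2 | hb2
  · rw [Nat.choose_eq_zero_of_lt hb2, zero_mul]
    refine sum_eq_zero fun a ha => ?_
    rw [Nat.choose_eq_zero_of_lt (hb2.trans_le (mem_Icc.1 ha).1), mul_zero, zero_mul]
  calc ∑ a ∈ Icc 2 k, a.choose 2 * b.choose a * (n - b).choose (k - a)
      = b.choose 2 * ∑ a ∈ Icc 2 k, (b - 2).choose (a - 2) * (n - b).choose (k - a) := by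
        rw [mul_sum]
        refine sum_congr rfl fun a ha => ?_
        rw [mul_comm (a.choose 2), Nat.choose_mul (mem_Icc.1 ha).1, mul_assoc]
    _ = b.choose 2 * (n - 2).choose (k - 2) := by
        rw [Nat.sum_Icc_choose_sub_mul_choose_sub _ _ hk, show b - 2 + (n - b) = n - 2 by omega]

theorem overcount_le_choose_two_mul_choose {n k b : ℕ} (hk : 2 ≤ k) (hb : b ≤ n) :
    ∑ a ∈ Icc 2 k, (a - 1) * b.choose a * (n - b).choose (k - a) ≤
      b.choose 2 * (n - 2).choose (k - 2) := by
  rw [← Nat.sum_Icc_choose_two_mul_choose_mul_choose hk hb]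
  gcongr with a
  exact Nat.sub_one_le_choose_two a

theorem choose_two_mul_choose_two_div_choose_two_le (n k b : ℕ) :
    (b.choose 2 * k.choose 2 / n.choose 2 : ℝ) ≤ (k : ℝ) ^ 2 * (b : ℝ) ^ 2 / (n : ℝ) ^ 2 := by
  rcases lt_or_ge n 2 with hn | hn
  · rw [Nat.choose_eq_zero_of_lt hn, Nat.cast_zero, div_zero]
    positivity
  rcases Nat.eq_zero_or_pos b with rfl | hb
  · simp
  rcases Nat.eq_zero_or_pos k with rfl | hk
  · simp
  have hb : (1 : ℝ) ≤ b := by exact_mod_cast hb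
  have hk : (1 : ℝ) ≤ k := by exact_mod_cast hk
  have hn : (2 : ℝ) ≤ n := by exact_mod_cast hn
  simp only [Nat.cast_choose_two]
  rw [div_le_div_iff₀ (by nlinarith) (by positivity)]
  have key : (b - 1) * (k - 1) * n ≤ 2 * (b * k * (n - 1) : ℝ) := by
    nlinarith [mul_nonneg (sub_nonneg.2 hb) (sub_nonneg.2 hk)]
  linear_combination mul_le_mul_of_nonneg_left key (by positivity : (0 : ℝ) ≤ b * k * n) / 4

theorem overcount_bound_general (n k b : ℕ) (hkn : k ≤ n) (hb : b ≤ n) :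
    ((∑ a ∈ Finset.Icc 2 k, (a - 1) * b.choose a * (n - b).choose (k - a) : ℕ) : ℝ) ≤
      (k : ℝ) ^ 2 * (b : ℝ) ^ 2 / (n : ℝ) ^ 2 * (n.choose k : ℝ) := by
  rcases lt_or_ge k 2 with hk2 | hk2
  · rw [Icc_eq_empty (by omega), sum_empty, Nat.cast_zero]
    positivity
  have hn : (0 : ℝ) < n.choose 2 := by exact_mod_cast Nat.choose_pos (hk2.trans hkn)
  have hsum : (∑ a ∈ Icc 2 k, (a - 1) * b.choose a * (n - b).choose (k - a) : ℕ) ≤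
      (b.choose 2 * (n - 2).choose (k - 2) : ℝ) := by
    exact_mod_cast overcount_le_choose_two_mul_choose hk2 hb
  have hpairs : (n.choose k * k.choose 2 : ℝ) = n.choose 2 * (n - 2).choose (k - 2) := by
    exact_mod_cast Nat.choose_mul hk2
  calc _ ≤ (b.choose 2 * (n - 2).choose (k - 2) : ℝ) := hsum
    _ = b.choose 2 * k.choose 2 / n.choose 2 * n.choose k := by
        field_simp
        linear_combination (b.choose 2 : ℝ) * hpairs.symm
    _ ≤ _ := by gcongr ?_ * _; exact choose_two_mul_choose_two_div_choose_two_le n k b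

/-- For `1 ≤ k ≤ n` and `b ≤ n`,
`Σ_{a=2}^{k} (a−1)·C(b,a)·C(n−b,k−a) ≤ (k²b²/n²)·C(n,k)`. -/
theorem overcount_bound (n k b : ℕ) (hk : 1 ≤ k) (hkn : k ≤ n) (hb : b ≤ n) :
    ((∑ a ∈ Finset.Icc 2 k, (a - 1) * b.choose a * (n - b).choose (k - a) : ℕ) : ℝ) ≤
      (k : ℝ) ^ 2 * (b : ℝ) ^ 2 / (n : ℝ) ^ 2 * (n.choose k : ℝ) :=
  overcount_bound_general n k b hkn hb
end

section
/- Let 𝒳 be a measurable space, n ≥ 1, ε > 0, and let A be a Markov kernel assigning to each dataset D ∈ 𝒳^n a probability measure A(D) on ℝ, satisfying ε-differential privacy: for all D, D' ∈ 𝒳^n differing in exactly one coordinate and every measurable set S ⊆ ℝ, A(D)(S) ≤ e^{ε}·A(D')(S). Let D_0, D_1 ∈ 𝒳^n differ in at most m coordinates with m·ε ≤ 1, and let v_0, v_1 ∈ ℝ. Then max( ∫ |x − v_0| dA(D_0)(x), ∫ |x − v_1| dA(D_1)(x) ) ≥ |v_0 − v_1|/10. -/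
/-!
Changing the `m` differing coordinates of `D₀` one at a time turns `ε`-differential privacy into
`A D₀ s ≤ e^{mε} A D₁ s ≤ 3 A D₁ s` for every measurable `s`. Let `S` be the ball of radius
`|v₀ - v₁| / 2` around `v₀`. Outside `S` the first error is at least `|v₀ - v₁| / 2`, inside `S`
the second one is, and the two measures cannot both be small on these complementary events:
`1 = A D₀ S + A D₀ Sᶜ ≤ 3 A D₁ S + A D₀ Sᶜ`.
-/

open MeasureTheory ProbabilityTheory
open scoped ENNReal

theorem le_pow_card_mul_of_le_mul_of_update {ι α : Type*} [DecidableEq ι]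
    (f : (ι → α) → ℝ≥0∞) (c : ℝ≥0∞)
    (hf : ∀ D D' : ι → α, (∃ i₀, ∀ j, j ≠ i₀ → D j = D' j) → f D ≤ c * f D')
    (js : Finset ι) {D D' : ι → α} (hDD' : ∀ i ∉ js, D i = D' i) :
    f D ≤ c ^ js.card * f D' := by
  induction js using Finset.induction_on generalizing D with
  | empty =>
    obtain rfl : D = D' := funext fun i => hDD' i (Finset.notMem_empty i)
    simp
  | @insert a js ha ih =>
    set D'' := Function.update D a (D' a)
    have hstep : f D ≤ c * f D'' :=
      hf D D'' ⟨a, fun j hj => (Function.update_of_ne hj _ _).symm⟩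
    have hrest : f D'' ≤ c ^ js.card * f D' := ih fun i hi => by
      by_cases hia : i = a
      · simp [D'', hia]
      · simpa [D'', hia] using hDD' i (by simp [hia, hi])
    calc f D ≤ c * (c ^ js.card * f D') := hstep.trans (mul_le_mul_right hrest c)
      _ = c ^ (insert a js).card * f D' := by
        rw [Finset.card_insert_of_notMem ha, ← mul_assoc, pow_succ']

section TwoPoint

variable {α : Type*} [PseudoMetricSpace α] [MeasurableSpace α] [OpensMeasurableSpace α]

theorem ofReal_mul_measure_le_lintegral_dist (μ : Measure α) (v : α) {r : ℝ} {s : Set α}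
    (hs : ∀ x ∈ s, r ≤ dist x v) :
    ENNReal.ofReal r * μ s ≤ ∫⁻ x, ENNReal.ofReal (dist x v) ∂μ := by
  calc ENNReal.ofReal r * μ s
      ≤ ENNReal.ofReal r * μ {x | ENNReal.ofReal r ≤ ENNReal.ofReal (dist x v)} :=
        mul_le_mul_right (measure_mono fun x hx => ENNReal.ofReal_le_ofReal (hs x hx)) _
    _ ≤ ∫⁻ x, ENNReal.ofReal (dist x v) ∂μ :=
        mul_meas_ge_le_lintegral₀
          (continuous_id.dist continuous_const).measurable.ennreal_ofReal.aemeasurable _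

theorem ofReal_half_dist_le_mul_max_lintegral_dist (μ₀ μ₁ : Measure α) [IsProbabilityMeasure μ₀]
    (K : ℝ≥0∞) (hK : ∀ s, MeasurableSet s → μ₀ s ≤ K * μ₁ s) (v₀ v₁ : α) :
    ENNReal.ofReal (dist v₀ v₁ / 2) ≤
      (K + 1) * max (∫⁻ x, ENNReal.ofReal (dist x v₀) ∂μ₀)
        (∫⁻ x, ENNReal.ofReal (dist x v₁) ∂μ₁) := by
  set r := dist v₀ v₁ / 2 with hr
  set S := Metric.ball v₀ r
  set M := max (∫⁻ x, ENNReal.ofReal (dist x v₀) ∂μ₀) (∫⁻ x, ENNReal.ofReal (dist x v₁) ∂μ₁)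
  have hS : MeasurableSet S := Metric.isOpen_ball.measurableSet
  have hout : ENNReal.ofReal r * μ₀ Sᶜ ≤ M :=
    (ofReal_mul_measure_le_lintegral_dist μ₀ v₀ fun x hx =>
      not_lt.mp (by simpa [S, Metric.mem_ball] using hx)).trans (le_max_left _ _)
  have hin : ENNReal.ofReal r * μ₁ S ≤ M :=
    (ofReal_mul_measure_le_lintegral_dist μ₁ v₁ fun x hx => by
      have hx : dist x v₀ < r := hx
      linarith [dist_triangle_left v₀ v₁ x, hr]).trans (le_max_right _ _)
  calc ENNReal.ofReal r = ENNReal.ofReal r * (μ₀ S + μ₀ Sᶜ) := by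
        rw [measure_add_measure_compl hS, measure_univ, mul_one]
    _ ≤ ENNReal.ofReal r * (K * μ₁ S + μ₀ Sᶜ) := by gcongr; exact hK S hS
    _ = K * (ENNReal.ofReal r * μ₁ S) + ENNReal.ofReal r * μ₀ Sᶜ := by ring
    _ ≤ K * M + M := by gcongr
    _ = (K + 1) * M := by ring

end TwoPoint

theorem dp_two_point_lower_bound_general
    {𝒳 : Type*} [MeasurableSpace 𝒳] {n : ℕ}
    (ε : ℝ) (hε : 0 < ε)
    (A : Kernel (Fin n → 𝒳) ℝ) [IsMarkovKernel A]
    (hDP : ∀ D D' : Fin n → 𝒳, (∃ i₀ : Fin n, ∀ j, j ≠ i₀ → D j = D' j) →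
      ∀ s : Set ℝ, MeasurableSet s → A D s ≤ ENNReal.ofReal (Real.exp ε) * A D' s)
    (m : ℕ) (hm : (m : ℝ) * ε ≤ 1)
    (D₀ D₁ : Fin n → 𝒳)
    (hdiff : ∃ js : Finset (Fin n), js.card ≤ m ∧ ∀ i ∉ js, D₀ i = D₁ i)
    (v₀ v₁ : ℝ) :
    ENNReal.ofReal (|v₀ - v₁| / 10) ≤
      max (∫⁻ x, ENNReal.ofReal |x - v₀| ∂(A D₀))
        (∫⁻ x, ENNReal.ofReal |x - v₁| ∂(A D₁)) := by
  obtain ⟨js, hcard, hagree⟩ := hdiff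
  set K := ENNReal.ofReal (Real.exp ε) ^ js.card
  have hK : ∀ s, MeasurableSet s → A D₀ s ≤ K * A D₁ s := fun s hs =>
    le_pow_card_mul_of_le_mul_of_update (fun D => A D s) _ (fun D D' h => hDP D D' h s hs) js
      hagree
  have hK3 : K ≤ 3 := by
    have hcardε : (js.card : ℝ) * ε ≤ 1 :=
      le_trans (mul_le_mul_of_nonneg_right (by exact_mod_cast hcard) hε.le) hm
    rw [show K = _ from (ENNReal.ofReal_pow (Real.exp_pos ε).le _).symm, ← Real.exp_nat_mul,
      ← ENNReal.ofReal_ofNat]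
    refine ENNReal.ofReal_le_ofReal ((Real.exp_le_exp.mpr hcardε).trans ?_)
    linarith [Real.exp_one_lt_d9]
  have htwo := ofReal_half_dist_le_mul_max_lintegral_dist (A D₀) (A D₁) K hK v₀ v₁
  simp only [Real.dist_eq] at htwo
  refine (ENNReal.mul_le_mul_iff_right (a := 4) (by norm_num) (by norm_num)).mp ?_
  calc 4 * ENNReal.ofReal (|v₀ - v₁| / 10) ≤ ENNReal.ofReal (|v₀ - v₁| / 2) := by
        rw [← ENNReal.ofReal_ofNat, ← ENNReal.ofReal_mul (by norm_num)]
        exact ENNReal.ofReal_le_ofReal (by linarith [abs_nonneg (v₀ - v₁)])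
    _ ≤ (K + 1) * _ := htwo
    _ ≤ 4 * _ := by gcongr; exact (add_le_add_left hK3 1).trans (by norm_num)

/-- Two-point lower bound for differentially private estimation:
if `A` is an `ε`-DP Markov kernel and the datasets `D₀, D₁` differ in at most `m`
coordinates with `m·ε ≤ 1`, then for any targets `v₀, v₁`,
`max(E|A(D₀) − v₀|, E|A(D₁) − v₁|) ≥ |v₀ − v₁|/10`. -/
theorem dp_two_point_lower_bound
    {𝒳 : Type*} [MeasurableSpace 𝒳] {n : ℕ} (hn : 1 ≤ n)
    (ε : ℝ) (hε : 0 < ε)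
    (A : Kernel (Fin n → 𝒳) ℝ) [IsMarkovKernel A]
    (hDP : ∀ D D' : Fin n → 𝒳, (∃ i₀ : Fin n, ∀ j, j ≠ i₀ → D j = D' j) →
      ∀ s : Set ℝ, MeasurableSet s → A D s ≤ ENNReal.ofReal (Real.exp ε) * A D' s)
    (m : ℕ) (hm : (m : ℝ) * ε ≤ 1)
    (D₀ D₁ : Fin n → 𝒳)
    (hdiff : ∃ js : Finset (Fin n), js.card ≤ m ∧ ∀ i ∉ js, D₀ i = D₁ i)
    (v₀ v₁ : ℝ) :
    ENNReal.ofReal (|v₀ - v₁| / 10) ≤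
      max (∫⁻ x, ENNReal.ofReal |x - v₀| ∂(A D₀))
        (∫⁻ x, ENNReal.ofReal |x - v₁| ∂(A D₁)) :=
  dp_two_point_lower_bound_general ε hε A hDP m hm D₀ D₁ hdiff v₀ v₁
end

section
/- For all integers k ≥ 1, b ≥ k, and m ≥ 0, one has 1 − binom(b,k)/binom(b+m,k) ≥ k·m/(b + (k+1)·m). -/
/-!
The ratio `C(b,k) / C(b+m,k)` is the product of the factors `(b-i)/(b+m-i)`, `i < k`, each at
most `b/(b+m)`; so it is at most `(b/(b+m))^k`. Bernoulli's inequality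
`(1 + m/b)^(k+1) ≥ 1 + (k+1) m/b` bounds this by `(b+m)/(b+(k+1)m) = 1 - k m/(b+(k+1)m)`.
-/

theorem sub_mul_add_le_add_sub_mul (k b m : ℕ) : (b - k) * (b + m) ≤ (b + m - k) * b := by
  rcases le_or_gt k b with hkb | hbk
  · zify [hkb, le_add_right hkb]
    nlinarith
  · simp [Nat.sub_eq_zero_of_le hbk.le]

theorem choose_mul_add_pow_le (b m : ℕ) :
    ∀ k, b.choose k * (b + m) ^ k ≤ (b + m).choose k * b ^ k
  | 0 => by simp
  | k + 1 => by
    refine Nat.le_of_mul_le_mul_right ?_ k.succ_pos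
    calc b.choose (k + 1) * (b + m) ^ (k + 1) * (k + 1)
        = b.choose (k + 1) * (k + 1) * ((b + m) ^ k * (b + m)) := by ring
      _ = b.choose k * (b + m) ^ k * ((b - k) * (b + m)) := by
        rw [Nat.choose_succ_right_eq]; ring
      _ ≤ (b + m).choose k * b ^ k * ((b + m - k) * b) :=
        Nat.mul_le_mul (choose_mul_add_pow_le b m k) (sub_mul_add_le_add_sub_mul k b m)
      _ = (b + m).choose (k + 1) * (k + 1) * (b ^ k * b) := by
        rw [Nat.choose_succ_right_eq]; ring
      _ = (b + m).choose (k + 1) * b ^ (k + 1) * (k + 1) := by ring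

theorem choose_mul_add_succ_mul_le (k b m : ℕ) :
    b.choose k * (b + (k + 1) * m) ≤ (b + m) * (b + m).choose k := by
  rcases (b + m).eq_zero_or_pos with hbm | hbm
  · obtain ⟨rfl, rfl⟩ : b = 0 ∧ m = 0 := by omega
    simp
  have bernoulli : b ^ k * (b + (k + 1) * m) ≤ (b + m) ^ (k + 1) :=
    calc b ^ k * (b + (k + 1) * m) = b ^ (k + 1) + (k + 1) * b ^ k * m := by ring
      _ ≤ (b + m) ^ (k + 1) := pow_add_mul_le_add_pow (Nat.zero_le b) (Nat.zero_le _) (k + 1)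
  refine Nat.le_of_mul_le_mul_right ?_ (pow_pos hbm k)
  calc b.choose k * (b + (k + 1) * m) * (b + m) ^ k
      = b.choose k * (b + m) ^ k * (b + (k + 1) * m) := by ring
    _ ≤ (b + m).choose k * b ^ k * (b + (k + 1) * m) :=
      Nat.mul_le_mul_right _ (choose_mul_add_pow_le b m k)
    _ = (b + m).choose k * (b ^ k * (b + (k + 1) * m)) := by ring
    _ ≤ (b + m).choose k * (b + m) ^ (k + 1) := Nat.mul_le_mul_left _ bernoulli
    _ = (b + m) * (b + m).choose k * (b + m) ^ k := by ring

/-- For `k ≥ 1`, `b ≥ k`, and `m ≥ 0`,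
`1 − C(b,k)/C(b+m,k) ≥ k·m/(b + (k+1)·m)`. -/
theorem choose_ratio_lower_bound (k b m : ℕ) (hk : 1 ≤ k) (hb : k ≤ b) :
    (k : ℝ) * (m : ℝ) / ((b : ℝ) + ((k : ℝ) + 1) * (m : ℝ)) ≤
      1 - (b.choose k : ℝ) / ((b + m).choose k : ℝ) := by
  have hB : (0 : ℝ) < (b + m).choose k := mod_cast Nat.choose_pos (le_add_right hb)
  have hD : (0 : ℝ) < b + (k + 1) * m := by
    have : (0 : ℝ) < b := mod_cast hk.trans hb
    positivity
  have key : (b.choose k : ℝ) * (b + (k + 1) * m) ≤ (b + m) * (b + m).choose k :=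
    mod_cast choose_mul_add_succ_mul_le k b m
  calc (k : ℝ) * m / (b + (k + 1) * m) = 1 - (b + m) / (b + (k + 1) * m) := by
        rw [eq_sub_iff_add_eq, ← add_div, div_eq_one_iff_eq hD.ne']; ring
    _ ≤ 1 - (b.choose k : ℝ) / (b + m).choose k :=
      sub_le_sub_left ((div_le_div_iff₀ hB hD).2 key) 1
end
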